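/- arXiv:1905.01432 — 3 statements merged into one kernel-verified Lean document; each statement's English description precedes it below -/
import Mathlib

section
/- For every integer n ≥ 1, every t > 0, every x ∈ ℝⁿ and every bounded continuous function f : ℝⁿ → ℝ, one has the dimension-free reverse Poincaré inequality 2t |∇H_t f(x)|² ≤ H_t(f²)(x) − (H_t f(x))². -/
open MeasureTheory ENNReal

/-- The Gauss–Weierstrass heat kernel on `ℝⁿ`:
`h_t(x) = (4πt)^{-n/2} exp(-|x|²/(4t))`. -/
noncomputable def heatKernel (n : ℕ) (t : ℝ) (x : EuclideanSpace ℝ (Fin n)) : ℝ :=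
  (4 * Real.pi * t) ^ (-(n : ℝ) / 2) * Real.exp (-‖x‖ ^ 2 / (4 * t))

/-- The heat semigroup on `ℝⁿ`: `H_t f = f * h_t` for `t > 0`, `H_0 f = f`. -/
noncomputable def heatSG (n : ℕ) (t : ℝ) (f : EuclideanSpace ℝ (Fin n) → ℝ)
    (x : EuclideanSpace ℝ (Fin n)) : ℝ :=
  if t = 0 then f x else ∫ y, f y * heatKernel n t (x - y)

open Real
open scoped RealInnerProductSpace

/-!
Differentiating under the integral sign, `⟪∇H_t f(x), e⟫ = -(2t)⁻¹ ∫ f(x - z) ⟪z, e⟫ h_t(z) dz`.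
As `z ↦ ⟪z, e⟫ h_t(z)` is odd, `f(x - z)` may be replaced by `f(x - z) - H_t f(x)`, and the
Cauchy–Schwarz inequality for the probability density `h_t` bounds the square of this integral
by the variance `H_t(f²)(x) - (H_t f(x))²` times the second moment
`∫ ⟪z, e⟫² h_t(z) dz = 2t‖e‖²`, which Gaussian integration by parts computes.
-/

section Gaussian

variable {V : Type*} [NormedAddCommGroup V] [InnerProductSpace ℝ V] [FiniteDimensional ℝ V]
  [MeasurableSpace V] [BorelSpace V] {b : ℝ}

lemma integrable_exp_neg_mul_sq_norm (hb : 0 < b) :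
    Integrable (fun v : V => exp (-b * ‖v‖ ^ 2)) :=
  .of_integral_ne_zero (by rw [GaussianFourier.integral_rexp_neg_mul_sq_norm hb]; positivity)

lemma mul_exp_neg_mul_le (hb : 0 < b) (u : ℝ) :
    u * exp (-b * u) ≤ 2 / b * exp (-(b / 2) * u) := by
  have hexp : exp (-b * u) = exp (-(b / 2) * u) * exp (-(b / 2) * u) := by
    rw [← exp_add]; ring_nf
  have hlin : b / 2 * u * exp (-(b / 2) * u) ≤ 1 := by
    have := add_one_le_exp (b / 2 * u)
    calc b / 2 * u * exp (-(b / 2) * u) ≤ exp (b / 2 * u) * exp (-(b / 2) * u) := by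
          gcongr; linarith
      _ = 1 := by rw [← exp_add]; ring_nf; exact exp_zero
  rw [hexp, div_mul_eq_mul_div, le_div_iff₀ hb]
  nlinarith [exp_pos (-(b / 2) * u)]

lemma integrable_one_add_norm_sq_mul_exp_neg_mul_sq_norm (hb : 0 < b) :
    Integrable (fun v : V => (1 + ‖v‖) ^ 2 * exp (-b * ‖v‖ ^ 2)) := by
  have hsq : Integrable (fun v : V => ‖v‖ ^ 2 * exp (-b * ‖v‖ ^ 2)) := by
    refine ((integrable_exp_neg_mul_sq_norm (half_pos hb)).const_mul (2 / b)).mono'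
      (by fun_prop) (.of_forall fun v => ?_)
    rw [norm_of_nonneg (by positivity)]
    exact mul_exp_neg_mul_le hb _
  refine (((integrable_exp_neg_mul_sq_norm hb).add hsq).const_mul 2).mono'
    (by fun_prop) (.of_forall fun v => ?_)
  rw [norm_of_nonneg (by positivity), Pi.add_apply]
  have := exp_pos (-b * ‖v‖ ^ 2)
  nlinarith [sq_nonneg (‖v‖ - 1)]

end Gaussian

lemma integral_mul_mul_sq_le_sq_mul_sq {α : Type*} [MeasurableSpace α] {μ : Measure α}
    {u v w : α → ℝ} (hw : 0 ≤ᵐ[μ] w) (hu : Integrable (fun a => u a ^ 2 * w a) μ)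
    (hv : Integrable (fun a => v a ^ 2 * w a) μ) (huv : Integrable (fun a => u a * v a * w a) μ) :
    (∫ a, u a * v a * w a ∂μ) ^ 2 ≤ (∫ a, u a ^ 2 * w a ∂μ) * ∫ a, v a ^ 2 * w a ∂μ := by
  have hquad (s : ℝ) : 0 ≤ (∫ a, v a ^ 2 * w a ∂μ) * (s * s)
      + 2 * (∫ a, u a * v a * w a ∂μ) * s + ∫ a, u a ^ 2 * w a ∂μ := by
    have hexpand : ∫ a, (u a + s * v a) ^ 2 * w a ∂μ = ∫ a, u a ^ 2 * w a ∂μ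
        + 2 * s * ∫ a, u a * v a * w a ∂μ + s * s * ∫ a, v a ^ 2 * w a ∂μ := by
      rw [show (fun a => (u a + s * v a) ^ 2 * w a) = fun a => u a ^ 2 * w a
          + 2 * s * (u a * v a * w a) + s * s * (v a ^ 2 * w a) from funext fun a => by ring,
        integral_add (by exact hu.add (huv.const_mul _)) (hv.const_mul _),
        integral_add hu (huv.const_mul _),
        integral_const_mul, integral_const_mul]
    have := integral_nonneg_of_ae (μ := μ) (f := fun a => (u a + s * v a) ^ 2 * w a)
      (hw.mono fun a ha => mul_nonneg (sq_nonneg _) ha)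
    linarith
  have := discrim_le_zero hquad
  rw [discrim] at this
  linarith

lemma ContinuousLinearMap.sq_opNorm_le_of_sq_apply_le {E : Type*} [SeminormedAddCommGroup E]
    [NormedSpace ℝ E] (L : E →L[ℝ] ℝ) {K : ℝ} (hK : 0 ≤ K) (h : ∀ e, L e ^ 2 ≤ K * ‖e‖ ^ 2) :
    ‖L‖ ^ 2 ≤ K := by
  have hL : ‖L‖ ≤ √K := L.opNorm_le_bound (sqrt_nonneg K) fun e => by
    rw [Real.norm_eq_abs, ← sqrt_sq_eq_abs, ← sqrt_sq (norm_nonneg e), ← sqrt_mul hK]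
    exact sqrt_le_sqrt (h e)
  calc ‖L‖ ^ 2 ≤ √K ^ 2 := by gcongr
    _ = K := sq_sqrt hK

section HeatKernel

variable {n : ℕ} {t : ℝ} {f : EuclideanSpace ℝ (Fin n) → ℝ} {M : ℝ}

local notation "ℝⁿ" => EuclideanSpace ℝ (Fin n)

lemma heatKernel_eq_mul_exp (z : ℝⁿ) :
    heatKernel n t z = (4 * π * t) ^ (-(n : ℝ) / 2) * exp (-(4 * t)⁻¹ * ‖z‖ ^ 2) := by
  rw [heatKernel]
  ring_nf

lemma heatKernel_nonneg (ht : 0 ≤ t) (z : ℝⁿ) : 0 ≤ heatKernel n t z := by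
  rw [heatKernel]
  positivity

@[fun_prop]
lemma continuous_heatKernel : Continuous (heatKernel n t) := by
  unfold heatKernel
  fun_prop

lemma integral_heatKernel (ht : 0 < t) : ∫ z, heatKernel n t z = 1 := by
  simp_rw [heatKernel_eq_mul_exp]
  rw [integral_const_mul, GaussianFourier.integral_rexp_neg_mul_sq_norm (by positivity),
    finrank_euclideanSpace_fin, show π / (4 * t)⁻¹ = 4 * π * t by field_simp,
    ← rpow_add (by positivity)]
  ring_nf
  exact rpow_zero _

lemma integrable_heatKernel (ht : 0 < t) : Integrable (heatKernel n t) :=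
  .of_integral_ne_zero (by rw [integral_heatKernel ht]; exact one_ne_zero)

lemma integrable_mul_heatKernel_of_abs_le (ht : 0 < t) {φ : ℝⁿ → ℝ}
    (hφ : AEStronglyMeasurable φ) {A : ℝ} (hA : ∀ z, |φ z| ≤ A * (1 + ‖z‖) ^ 2) :
    Integrable (fun z => φ z * heatKernel n t z) := by
  refine ((integrable_one_add_norm_sq_mul_exp_neg_mul_sq_norm (V := ℝⁿ)
    (b := (4 * t)⁻¹) (by positivity)).const_mul (A * (4 * π * t) ^ (-(n : ℝ) / 2))).mono'
    (hφ.mul continuous_heatKernel.aestronglyMeasurable) (.of_forall fun z => ?_)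
  rw [norm_mul, norm_of_nonneg (heatKernel_nonneg ht.le z), heatKernel_eq_mul_exp,
    Real.norm_eq_abs]
  calc |φ z| * ((4 * π * t) ^ (-(n : ℝ) / 2) * exp (-(4 * t)⁻¹ * ‖z‖ ^ 2))
      ≤ A * (1 + ‖z‖) ^ 2 * ((4 * π * t) ^ (-(n : ℝ) / 2) * exp (-(4 * t)⁻¹ * ‖z‖ ^ 2)) := by
        gcongr
        exact hA z
    _ = _ := by ring

lemma integrable_inner_mul_heatKernel (ht : 0 < t) (e : ℝⁿ) :
    Integrable (fun z => ⟪z, e⟫ * heatKernel n t z) :=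
  integrable_mul_heatKernel_of_abs_le ht (by fun_prop) (A := ‖e‖) fun z =>
    (abs_real_inner_le_norm z e).trans (by
      nlinarith [norm_nonneg e, mul_nonneg (norm_nonneg e) (norm_nonneg z),
        mul_nonneg (norm_nonneg e) (sq_nonneg ‖z‖)])

lemma integrable_inner_sq_mul_heatKernel (ht : 0 < t) (e : ℝⁿ) :
    Integrable (fun z => ⟪z, e⟫ ^ 2 * heatKernel n t z) :=
  integrable_mul_heatKernel_of_abs_le ht (by fun_prop) (A := ‖e‖ ^ 2) fun z => by
    rw [abs_pow]
    calc |⟪z, e⟫| ^ 2 ≤ (‖z‖ * ‖e‖) ^ 2 := by gcongr; exact abs_real_inner_le_norm z e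
      _ ≤ ‖e‖ ^ 2 * (1 + ‖z‖) ^ 2 := by nlinarith [norm_nonneg z, norm_nonneg e]

lemma integral_inner_mul_heatKernel (e : ℝⁿ) : ∫ z, ⟪z, e⟫ * heatKernel n t z = 0 := by
  have h := integral_neg_eq_self (fun z : ℝⁿ => ⟪z, e⟫ * heatKernel n t z) volume
  simp only [inner_neg_left, heatKernel, norm_neg, neg_mul, integral_neg] at h
  simp only [heatKernel]
  linarith

lemma hasFDerivAt_heatKernel (z : ℝⁿ) :
    HasFDerivAt (heatKernel n t) ((-(2 * t)⁻¹ * heatKernel n t z) • innerSL ℝ z) z := by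
  have h := (((hasFDerivAt_id z).norm_sq.const_mul (-(4 * t)⁻¹)).exp).const_mul
    ((4 * π * t) ^ (-(n : ℝ) / 2))
  rw [show heatKernel n t = _ from funext heatKernel_eq_mul_exp]
  refine h.congr_fderiv ?_
  ext v
  simp only [id_eq, ContinuousLinearMap.comp_id, smul_apply, coe_innerSL_apply, nsmul_eq_mul,
    smul_eq_mul]
  ring

lemma integral_inner_sq_mul_heatKernel (ht : 0 < t) (e : ℝⁿ) :
    ∫ z, ⟪z, e⟫ ^ 2 * heatKernel n t z = 2 * t * ‖e‖ ^ 2 := by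
  have hderiv (z : ℝⁿ) :
      fderiv ℝ (heatKernel n t) z e = -(2 * t)⁻¹ * (⟪z, e⟫ * heatKernel n t z) := by
    simp only [(hasFDerivAt_heatKernel z).fderiv, smul_apply, coe_innerSL_apply, smul_eq_mul]
    ring
  have hinner (z : ℝⁿ) : fderiv ℝ (fun z => ⟪z, e⟫) z e = ‖e‖ ^ 2 := by simp [fderiv_inner_apply]
  have hibp := integral_mul_fderiv_eq_neg_fderiv_mul_of_integrable (μ := volume)
    (f := fun z : ℝⁿ => ⟪z, e⟫) (g := heatKernel n t) (v := e)
    (by simpa only [hinner] using (integrable_heatKernel ht).const_mul (‖e‖ ^ 2))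
    (by simpa only [hderiv, mul_left_comm _ (-(2 * t)⁻¹), ← mul_assoc, ← sq]
      using (integrable_inner_sq_mul_heatKernel ht e).const_mul (-(2 * t)⁻¹))
    (integrable_inner_mul_heatKernel ht e)
    (fun z _ => differentiableAt_id.inner ℝ (differentiableAt_const e))
    (fun z _ => (hasFDerivAt_heatKernel z).differentiableAt)
  have hlhs : ∫ z, ⟪z, e⟫ * fderiv ℝ (heatKernel n t) z e
      = -(2 * t)⁻¹ * ∫ z, ⟪z, e⟫ ^ 2 * heatKernel n t z := by
    rw [← integral_const_mul]
    congr with z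
    rw [hderiv]
    ring
  have hrhs : ∫ z, fderiv ℝ (fun z => ⟪z, e⟫) z e * heatKernel n t z = ‖e‖ ^ 2 := by
    simp_rw [hinner]
    rw [integral_const_mul, integral_heatKernel ht, mul_one]
  rw [hlhs, hrhs] at hibp
  field_simp at hibp
  linarith

lemma heatSG_eq_integral_sub (ht : t ≠ 0) (x : ℝⁿ) :
    heatSG n t f x = ∫ z, f (x - z) * heatKernel n t z := by
  rw [heatSG, if_neg ht,
    ← integral_sub_left_eq_self (fun z => f (x - z) * heatKernel n t z) volume x]
  simp only [_root_.sub_sub_cancel]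

lemma norm_mul_heatKernel_le (ht : 0 ≤ t) {z w : ℝⁿ} (hzw : ‖z - w‖ ≤ 1) :
    ‖z‖ * heatKernel n t z ≤ (4 * π * t) ^ (-(n : ℝ) / 2) * exp (4 * t)⁻¹
      * ((1 + ‖w‖) ^ 2 * exp (-((4 * t)⁻¹ / 2) * ‖w‖ ^ 2)) := by
  have hb : 0 ≤ (4 * t)⁻¹ := by positivity
  have hw : ‖w‖ ≤ ‖z‖ + 1 := by
    have := norm_le_norm_add_norm_sub' w z
    rw [norm_sub_rev] at this
    linarith
  have hz : ‖z‖ ≤ ‖w‖ + 1 := by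
    have := norm_le_norm_add_norm_sub' z w
    linarith
  have hexp : exp (-(4 * t)⁻¹ * ‖z‖ ^ 2) ≤ exp (4 * t)⁻¹ * exp (-((4 * t)⁻¹ / 2) * ‖w‖ ^ 2) := by
    have hsq : ‖w‖ ^ 2 ≤ 2 * ‖z‖ ^ 2 + 2 := by
      nlinarith [mul_self_le_mul_self (norm_nonneg w) hw, sq_nonneg (‖z‖ - 1)]
    rw [← exp_add, exp_le_exp]
    nlinarith [mul_le_mul_of_nonneg_left hsq hb]
  rw [heatKernel_eq_mul_exp]
  calc ‖z‖ * ((4 * π * t) ^ (-(n : ℝ) / 2) * exp (-(4 * t)⁻¹ * ‖z‖ ^ 2))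
      ≤ (1 + ‖w‖) ^ 2 * ((4 * π * t) ^ (-(n : ℝ) / 2)
          * (exp (4 * t)⁻¹ * exp (-((4 * t)⁻¹ / 2) * ‖w‖ ^ 2))) := by
        gcongr
        nlinarith [norm_nonneg w]
    _ = _ := by ring

lemma integral_sub_sq_mul_heatKernel (ht : 0 < t) (hf : AEStronglyMeasurable f)
    (hM : ∀ z, |f z| ≤ M) :
    ∫ z, (f z - ∫ w, f w * heatKernel n t w) ^ 2 * heatKernel n t z
      = (∫ z, f z ^ 2 * heatKernel n t z) - (∫ z, f z * heatKernel n t z) ^ 2 := by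
  set m := ∫ w, f w * heatKernel n t w
  have hk := integrable_heatKernel (n := n) ht
  have hfk : Integrable (fun z => f z * heatKernel n t z) :=
    hk.bdd_mul hf (.of_forall hM)
  have hf2k : Integrable (fun z => f z ^ 2 * heatKernel n t z) :=
    hk.bdd_mul (hf.pow 2) (c := M ^ 2) (.of_forall fun z => by
      rw [norm_pow, Real.norm_eq_abs]; exact pow_le_pow_left₀ (abs_nonneg _) (hM z) 2)
  calc ∫ z, (f z - m) ^ 2 * heatKernel n t z
      = (∫ z, f z ^ 2 * heatKernel n t z) - 2 * m * (∫ z, f z * heatKernel n t z)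
          + m ^ 2 * ∫ z, heatKernel n t z := by
        rw [show (fun z => (f z - m) ^ 2 * heatKernel n t z) = fun z =>
            f z ^ 2 * heatKernel n t z - 2 * m * (f z * heatKernel n t z)
              + m ^ 2 * heatKernel n t z from funext fun z => by ring,
          integral_add (by exact hf2k.sub (hfk.const_mul _)) (hk.const_mul _),
          integral_sub hf2k (hfk.const_mul _), integral_const_mul, integral_const_mul]
    _ = _ := by rw [integral_heatKernel ht]; ring

lemma sq_integral_mul_inner_mul_heatKernel_le (ht : 0 < t) (hf : AEStronglyMeasurable f)
    (hM : ∀ z, |f z| ≤ M) (e : ℝⁿ) :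
    (∫ z, f z * ⟪z, e⟫ * heatKernel n t z) ^ 2
      ≤ 2 * t * ‖e‖ ^ 2 * ∫ z, (f z - ∫ w, f w * heatKernel n t w) ^ 2 * heatKernel n t z := by
  set m := ∫ w, f w * heatKernel n t w
  have hfm : AEStronglyMeasurable (fun z => f z - m) := by fun_prop
  have hfm_le : ∀ z, ‖f z - m‖ ≤ M + |m| := fun z =>
    (Real.norm_eq_abs _).trans_le ((abs_sub _ _).trans (by linarith [hM z]))
  have hik := integrable_inner_mul_heatKernel ht e
  have hfik : Integrable (fun z => f z * ⟪z, e⟫ * heatKernel n t z) := by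
    simpa only [mul_assoc] using hik.bdd_mul hf (.of_forall hM)
  have hcentered : ∫ z, (f z - m) * ⟪z, e⟫ * heatKernel n t z
      = ∫ z, f z * ⟪z, e⟫ * heatKernel n t z := by
    rw [show (fun z => (f z - m) * ⟪z, e⟫ * heatKernel n t z) = fun z =>
        f z * ⟪z, e⟫ * heatKernel n t z - m * (⟪z, e⟫ * heatKernel n t z) from
        funext fun z => by ring,
      integral_sub hfik (hik.const_mul m), integral_const_mul, integral_inner_mul_heatKernel,
      mul_zero, sub_zero]
  rw [← hcentered, mul_comm (2 * t * ‖e‖ ^ 2), ← integral_inner_sq_mul_heatKernel ht e]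
  refine integral_mul_mul_sq_le_sq_mul_sq (.of_forall (heatKernel_nonneg ht.le)) ?_
    (integrable_inner_sq_mul_heatKernel ht e) ?_
  · exact (integrable_heatKernel ht).bdd_mul (hfm.pow 2) (c := (M + |m|) ^ 2)
      (.of_forall fun z => by
        rw [norm_pow]; exact pow_le_pow_left₀ (norm_nonneg _) (hfm_le z) 2)
  · simpa only [mul_assoc] using hik.bdd_mul hfm (.of_forall hfm_le)

lemma hasFDerivAt_heatSG (ht : 0 < t) (hf : AEStronglyMeasurable f) (hM : ∀ y, |f y| ≤ M)
    (x : ℝⁿ) :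
    HasFDerivAt (heatSG n t f)
      (∫ y, (-(2 * t)⁻¹ * f y * heatKernel n t (x - y)) • innerSL ℝ (x - y)) x := by
  have hfun : heatSG n t f = fun x' => ∫ y, f y * heatKernel n t (x' - y) :=
    funext fun x' => if_neg ht.ne'
  rw [hfun]
  set C := (2 * t)⁻¹ * M * ((4 * π * t) ^ (-(n : ℝ) / 2) * exp (4 * t)⁻¹)
  refine hasFDerivAt_integral_of_dominated_of_fderiv_le
    (F := fun x' y => f y * heatKernel n t (x' - y))
    (F' := fun x' y => (-(2 * t)⁻¹ * f y * heatKernel n t (x' - y)) • innerSL ℝ (x' - y))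
    (bound := fun y => C * ((1 + ‖x - y‖) ^ 2 * exp (-((4 * t)⁻¹ / 2) * ‖x - y‖ ^ 2)))
    (Metric.closedBall_mem_nhds x one_pos) (.of_forall fun x' => by fun_prop)
    (((integrable_heatKernel ht).comp_sub_left x).bdd_mul hf (.of_forall hM)) (by fun_prop)
    (.of_forall fun y x' hx' => ?_) ?_ (.of_forall fun y x' _ => ?_)
  · rw [norm_smul, innerSL_apply_norm, norm_mul, norm_mul, norm_neg, norm_inv,
      norm_of_nonneg (by positivity : (0 : ℝ) ≤ 2 * t),
      norm_of_nonneg (heatKernel_nonneg ht.le _), Real.norm_eq_abs]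
    have hle := norm_mul_heatKernel_le (n := n) ht.le (z := x' - y) (w := x - y)
      (by rw [sub_sub_sub_cancel_right, ← dist_eq_norm]; exact hx')
    calc (2 * t)⁻¹ * |f y| * heatKernel n t (x' - y) * ‖x' - y‖
        = (2 * t)⁻¹ * |f y| * (‖x' - y‖ * heatKernel n t (x' - y)) := by ring
      _ ≤ (2 * t)⁻¹ * M * ((4 * π * t) ^ (-(n : ℝ) / 2) * exp (4 * t)⁻¹
          * ((1 + ‖x - y‖) ^ 2 * exp (-((4 * t)⁻¹ / 2) * ‖x - y‖ ^ 2))) := by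
        have hM0 : 0 ≤ M := (abs_nonneg _).trans (hM y)
        exact mul_le_mul (by gcongr; exact hM y) hle
          (mul_nonneg (norm_nonneg _) (heatKernel_nonneg ht.le _)) (by positivity)
      _ = _ := by ring
  · exact ((integrable_one_add_norm_sq_mul_exp_neg_mul_sq_norm
      (by positivity)).comp_sub_left x).const_mul C
  · refine (((hasFDerivAt_heatKernel (x' - y)).comp x'
      ((hasFDerivAt_id x').sub_const y)).const_mul (f y)).congr_fderiv ?_
    ext v
    simp only [ContinuousLinearMap.comp_id, smul_apply, coe_innerSL_apply, smul_eq_mul]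
    ring

lemma fderiv_heatSG_apply (ht : 0 < t) (hf : AEStronglyMeasurable f) (hM : ∀ y, |f y| ≤ M)
    (x e : ℝⁿ) :
    fderiv ℝ (heatSG n t f) x e = -(2 * t)⁻¹ * ∫ z, f (x - z) * ⟪z, e⟫ * heatKernel n t z := by
  have hnorm : Integrable (fun y => ‖x - y‖ * heatKernel n t (x - y)) :=
    (integrable_mul_heatKernel_of_abs_le ht continuous_norm.aestronglyMeasurable (A := 1)
      fun z => by rw [abs_norm]; nlinarith [norm_nonneg z]).comp_sub_left x
  rw [(hasFDerivAt_heatSG ht hf hM x).fderiv, ContinuousLinearMap.integral_apply]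
  · simp only [smul_apply, innerSL_apply_apply, smul_eq_mul]
    rw [← integral_const_mul, ← integral_sub_left_eq_self _ volume x]
    congr with y
    simp only [_root_.sub_sub_cancel]
    ring
  · refine (hnorm.const_mul ((2 * t)⁻¹ * M)).mono' (by fun_prop) (.of_forall fun y => ?_)
    rw [norm_smul, innerSL_apply_norm, norm_mul, norm_mul, norm_neg, norm_inv,
      norm_of_nonneg (by positivity : (0 : ℝ) ≤ 2 * t),
      norm_of_nonneg (heatKernel_nonneg ht.le _), Real.norm_eq_abs]
    calc (2 * t)⁻¹ * |f y| * heatKernel n t (x - y) * ‖x - y‖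
        = (2 * t)⁻¹ * |f y| * (‖x - y‖ * heatKernel n t (x - y)) := by ring
      _ ≤ (2 * t)⁻¹ * M * (‖x - y‖ * heatKernel n t (x - y)) := by
        gcongr
        · exact mul_nonneg (norm_nonneg _) (heatKernel_nonneg ht.le _)
        · exact hM y

end HeatKernel

theorem reverse_poincare_inequality_general (n : ℕ) (t : ℝ) (ht : 0 < t)
    (x : EuclideanSpace ℝ (Fin n)) (f : EuclideanSpace ℝ (Fin n) → ℝ)
    (hfc : Continuous f) (hfb : ∃ M : ℝ, ∀ y, |f y| ≤ M) :
    2 * t * ‖fderiv ℝ (heatSG n t f) x‖ ^ 2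
      ≤ heatSG n t (fun y => f y ^ 2) x - heatSG n t f x ^ 2 := by
  obtain ⟨M, hM⟩ := hfb
  have hfx : AEStronglyMeasurable (fun z => f (x - z)) := by fun_prop
  rw [heatSG_eq_integral_sub ht.ne', heatSG_eq_integral_sub ht.ne',
    ← integral_sub_sq_mul_heatKernel ht hfx fun z => hM _]
  set V := ∫ z, (f (x - z) - ∫ w, f (x - w) * heatKernel n t w) ^ 2 * heatKernel n t z
  have hV : 0 ≤ V := integral_nonneg fun z => mul_nonneg (sq_nonneg _) (heatKernel_nonneg ht.le z)
  have hgrad (e : EuclideanSpace ℝ (Fin n)) :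
      fderiv ℝ (heatSG n t f) x e ^ 2 ≤ V / (2 * t) * ‖e‖ ^ 2 := by
    rw [fderiv_heatSG_apply ht hfc.aestronglyMeasurable hM]
    have hcov := sq_integral_mul_inner_mul_heatKernel_le ht hfx (fun z => hM _) e
    calc (-(2 * t)⁻¹ * ∫ z, f (x - z) * ⟪z, e⟫ * heatKernel n t z) ^ 2
        = ((2 * t)⁻¹) ^ 2 * (∫ z, f (x - z) * ⟪z, e⟫ * heatKernel n t z) ^ 2 := by ring
      _ ≤ ((2 * t)⁻¹) ^ 2 * (2 * t * ‖e‖ ^ 2 * V) := by gcongr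
      _ = V / (2 * t) * ‖e‖ ^ 2 := by field_simp
  have hnorm := (fderiv ℝ (heatSG n t f) x).sq_opNorm_le_of_sq_apply_le
    (div_nonneg hV (by positivity)) hgrad
  rwa [le_div_iff₀' (by positivity)] at hnorm

/-- Dimension-free reverse Poincaré inequality for the heat semigroup on `ℝⁿ`:
`2t |∇H_t f(x)|² ≤ H_t(f²)(x) − (H_t f(x))²` for bounded continuous `f`. -/
theorem reverse_poincare_inequality (n : ℕ) (hn : 1 ≤ n) (t : ℝ) (ht : 0 < t)
    (x : EuclideanSpace ℝ (Fin n)) (f : EuclideanSpace ℝ (Fin n) → ℝ)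
    (hfc : Continuous f) (hfb : ∃ M : ℝ, ∀ y, |f y| ≤ M) :
    2 * t * ‖fderiv ℝ (heatSG n t f) x‖ ^ 2
      ≤ heatSG n t (fun y => f y ^ 2) x - heatSG n t f x ^ 2 :=
  reverse_poincare_inequality_general n t ht x f hfc hfb
end

section
/- Let n ≥ 1, α ≥ 0, and let f : ℝⁿ → ℝ be bounded, continuous and integrable. Then for every x ∈ ℝⁿ, ∫_0^∞ |∇H_t^α f(x)|² dt ≤ 2 ∫_0^∞ e^{-αt} H_t(|∇H_t^α f|²)(x) dt; that is, 𝒢(f)(x) ≤ √2 · 𝒢_*(f)(x), where 𝒢_*(f)(x) = (∫_0^∞ H_t^α(|∇H_t^α f|²)(x) dt)^{1/2}. -/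
/-!
Substitute `t = 2s`; the Jacobian is the factor `2`. By the semigroup law
`∇H_{2s} f = H_s(∇H_s f)`, and Jensen's inequality for the probability density `h_s` gives
`|H_s(∇H_s f)|² ≤ H_s(|∇H_s f|²)`. The exponential weights fit because
`e^{-4αs} ≤ e^{-3αs}` when `α ≥ 0`.
-/

open MeasureTheory ENNReal

open ContinuousLinearMap (flip_mul lsmul lsmul_apply mul)
open scoped Convolution

section RealConvolution

variable {G : Type*} [NormedAddCommGroup G] [MeasurableSpace G] {μ : Measure G}

lemma norm_convolution_lsmul_le {F : Type*} [NormedAddCommGroup F] [NormedSpace ℝ F]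
    {φ : G → ℝ} {ψ : G → F} {A : ℝ} (hφ : Integrable φ μ) (hψb : ∀ y, ‖ψ y‖ ≤ A) (x : G) :
    ‖(φ ⋆[lsmul ℝ ℝ, μ] ψ) x‖ ≤ (∫ y, ‖φ y‖ ∂μ) * A := by
  rw [convolution_lsmul, ← integral_mul_const]
  refine norm_integral_le_of_norm_le (hφ.norm.mul_const A) (ae_of_all _ fun y => ?_)
  rw [norm_smul]
  exact mul_le_mul_of_nonneg_left (hψb _) (norm_nonneg _)

variable [OpensMeasurableSpace G]

lemma convolutionExistsAt_of_bounded {φ ψ : G → ℝ} {A : ℝ} (hφ : Integrable φ μ)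
    (hψ : Continuous ψ) (hψb : ∀ y, ‖ψ y‖ ≤ A) (x : G) :
    ConvolutionExistsAt φ ψ x (mul ℝ ℝ) μ :=
  hφ.mul_bdd (hψ.comp (continuous_sub_left x)).aestronglyMeasurable (ae_of_all _ fun _ => hψb _)

variable [NormedSpace ℝ G] [SecondCountableTopology G]

lemma hasFDerivAt_convolution_of_bounded {φ ψ : G → ℝ} {ψ' : G → G →L[ℝ] ℝ} {A C : ℝ}
    (hφ : Integrable φ μ) (hψ : ∀ y, HasFDerivAt ψ (ψ' y) y) (hψb : ∀ y, ‖ψ y‖ ≤ A)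
    (hψ'c : Continuous ψ') (hψ'b : ∀ y, ‖ψ' y‖ ≤ C) (x : G) :
    HasFDerivAt (φ ⋆[mul ℝ ℝ, μ] ψ) ((φ ⋆[lsmul ℝ ℝ, μ] ψ') x) x := by
  have hψc : Continuous ψ := continuous_iff_continuousAt.mpr fun y => (hψ y).continuousAt
  refine hasFDerivAt_integral_of_dominated_of_fderiv_le
    (F' := fun x' y => lsmul ℝ ℝ (φ y) (ψ' (x' - y))) (bound := fun y => ‖φ y‖ * C)
    Filter.univ_mem (Filter.Eventually.of_forall fun x' =>
      (convolutionExistsAt_of_bounded hφ hψc hψb x').aestronglyMeasurable)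
    (convolutionExistsAt_of_bounded hφ hψc hψb x)
    ((lsmul ℝ ℝ).aestronglyMeasurable_comp₂ hφ.aestronglyMeasurable
      (hψ'c.comp (continuous_sub_left x)).aestronglyMeasurable)
    (ae_of_all _ fun y x' _ => ?_) (hφ.norm.mul_const C) (ae_of_all _ fun y x' _ => ?_)
  · rw [lsmul_apply, norm_smul]
    exact mul_le_mul_of_nonneg_left (hψ'b _) (norm_nonneg _)
  · exact ((hψ (x' - y)).comp x' ((hasFDerivAt_id x').sub_const y)).const_mul (φ y)

end RealConvolution

section Jensen

variable {α : Type*} [MeasurableSpace α] {μ : Measure α} {k : α → ℝ}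

lemma sq_integral_mul_le_integral_mul_sq {a : α → ℝ} (hk0 : 0 ≤ k) (hk : Integrable k μ)
    (hk1 : ∫ y, k y ∂μ = 1) (hka : Integrable (fun y => k y * a y) μ)
    (hka2 : Integrable (fun y => k y * a y ^ 2) μ) :
    (∫ y, k y * a y ∂μ) ^ 2 ≤ ∫ y, k y * a y ^ 2 ∂μ := by
  set m := ∫ y, k y * a y ∂μ
  -- the variance of `a` under the density `k` is nonnegative
  have hvar : 0 ≤ ∫ y, k y * (a y - m) ^ 2 ∂μ :=
    integral_nonneg fun y => mul_nonneg (hk0 y) (sq_nonneg _)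
  have hexpand : ∫ y, k y * (a y - m) ^ 2 ∂μ
      = ∫ y, k y * a y ^ 2 ∂μ - 2 * m * m + m ^ 2 * ∫ y, k y ∂μ := by
    have : (fun y => k y * (a y - m) ^ 2)
        = fun y => k y * a y ^ 2 - 2 * m * (k y * a y) + m ^ 2 * k y := by
      ext y; ring
    have hdiff : Integrable (fun y => k y * a y ^ 2 - 2 * m * (k y * a y)) μ :=
      hka2.sub (hka.const_mul _)
    rw [this, integral_add hdiff (hk.const_mul _), integral_sub hka2 (hka.const_mul _),
      integral_const_mul, integral_const_mul]
  rw [hexpand, hk1] at hvar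
  linarith

lemma norm_integral_smul_sq_le {F : Type*} [NormedAddCommGroup F] [NormedSpace ℝ F]
    {D : α → F} {C : ℝ} (hk0 : 0 ≤ k) (hk : Integrable k μ) (hk1 : ∫ y, k y ∂μ = 1)
    (hD : AEStronglyMeasurable D μ) (hDb : ∀ y, ‖D y‖ ≤ C) :
    ‖∫ y, k y • D y ∂μ‖ ^ 2 ≤ ∫ y, k y * ‖D y‖ ^ 2 ∂μ := by
  have hka : Integrable (fun y => k y * ‖D y‖) μ :=
    hk.mul_bdd hD.norm (ae_of_all _ fun y => by simpa using hDb y)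
  have hka2 : Integrable (fun y => k y * ‖D y‖ ^ 2) μ :=
    hk.mul_bdd (hD.norm.pow 2) (ae_of_all _ fun y => by
      simpa using pow_le_pow_left₀ (norm_nonneg _) (hDb y) 2)
  have hnorm : ‖∫ y, k y • D y ∂μ‖ ≤ ∫ y, k y * ‖D y‖ ∂μ := by
    refine (norm_integral_le_integral_norm _).trans_eq (integral_congr_ae (ae_of_all _ fun y => ?_))
    simp only [norm_smul, Real.norm_of_nonneg (hk0 y)]
  exact (pow_le_pow_left₀ (norm_nonneg _) hnorm 2).trans
    (sq_integral_mul_le_integral_mul_sq hk0 hk hk1 hka hka2)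

end Jensen

lemma lintegral_Ioi_eq_mul_lintegral_comp_mul {c : ℝ} (hc : 0 < c) (g : ℝ → ℝ≥0∞) :
    ∫⁻ t in Set.Ioi 0, g t = ENNReal.ofReal c * ∫⁻ s in Set.Ioi 0, g (c * s) := by
  have h := lintegral_image_eq_lintegral_abs_deriv_mul (measurableSet_Ioi (a := 0))
    (fun x _ => ((hasDerivAt_id x).const_mul c).hasDerivWithinAt)
    (mul_right_injective₀ hc.ne').injOn g
  simp only [id, mul_one, abs_of_pos hc, Set.image_const_mul_Ioi_zero hc] at h
  rw [h, lintegral_const_mul' _ _ ENNReal.ofReal_ne_top]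

lemma mul_exp_neg_sq_div_le {t : ℝ} (ht : 0 < t) (r : ℝ) :
    r * Real.exp (-r ^ 2 / (4 * t)) ≤ 1 + 4 * t := by
  set u := r ^ 2 / (4 * t)
  have he : Real.exp (-u) ≤ 1 := Real.exp_le_one_iff.mpr (neg_nonpos.mpr (by positivity))
  have hu : u * Real.exp (-u) ≤ 1 := by
    calc u * Real.exp (-u) ≤ Real.exp u * Real.exp (-u) := by
          gcongr; linarith [Real.add_one_le_exp u]
      _ = 1 := by rw [← Real.exp_add, add_neg_cancel, Real.exp_zero]
  have hr : r ^ 2 * Real.exp (-u) ≤ 4 * t := by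
    have : r ^ 2 = 4 * t * u := by simp only [u]; field_simp
    rw [this, mul_assoc]
    exact mul_le_of_le_one_right (by positivity) hu
  rw [neg_div]
  nlinarith [Real.exp_pos (-u), sq_nonneg (r - 1)]

namespace HeatKernel

variable {n : ℕ} {s t : ℝ}

local notation "E" => EuclideanSpace ℝ (Fin n)

lemma heatKernel_eq (t : ℝ) (x : E) :
    heatKernel n t x
      = (4 * Real.pi * t) ^ (-(n : ℝ) / 2) * Real.exp (-(1 / (4 * t)) * ‖x‖ ^ 2) := by
  rw [heatKernel]
  ring_nf

lemma heatKernel_pos (ht : 0 < t) (x : E) : 0 < heatKernel n t x := by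
  unfold heatKernel
  positivity

lemma continuous_heatKernel (t : ℝ) : Continuous (heatKernel n t) := by
  unfold heatKernel
  fun_prop

lemma norm_heatKernel_le (ht : 0 < t) (x : E) :
    ‖heatKernel n t x‖ ≤ (4 * Real.pi * t) ^ (-(n : ℝ) / 2) := by
  rw [Real.norm_of_nonneg (heatKernel_pos ht x).le]
  refine mul_le_of_le_one_right (by positivity) (Real.exp_le_one_iff.mpr ?_)
  exact div_nonpos_of_nonpos_of_nonneg (neg_nonpos.mpr (by positivity)) (by positivity)

lemma integrable_heatKernel (ht : 0 < t) : Integrable (heatKernel n t) := by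
  have hb : (0 : ℂ).re < (1 / (4 * t) : ℂ).re := by simp; positivity
  have h := (GaussianFourier.integrable_cexp_neg_mul_sq_norm_add_of_euclideanSpace hb 0
    (0 : E)).norm.const_mul ((4 * Real.pi * t) ^ (-(n : ℝ) / 2))
  refine h.congr (Filter.Eventually.of_forall fun x => ?_)
  simp [heatKernel_eq, Complex.norm_exp, ← Complex.ofReal_pow]

lemma integral_heatKernel (ht : 0 < t) : ∫ x : E, heatKernel n t x = 1 := by
  have h4 : 0 < 4 * Real.pi * t := by positivity
  simp_rw [heatKernel_eq]
  rw [integral_const_mul, GaussianFourier.integral_rexp_neg_mul_sq_norm (by positivity),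
    show Real.pi / (1 / (4 * t)) = 4 * Real.pi * t by field_simp, finrank_euclideanSpace_fin,
    ← Real.rpow_add h4, neg_div, neg_add_cancel, Real.rpow_zero]

/-- Completing the square in the exponent. -/
lemma heatKernel_mul_heatKernel (hs : 0 < s) (ht : 0 < t) (a w : E) :
    heatKernel n s (a - w) * heatKernel n t w
      = heatKernel n (s + t) a * heatKernel n (s * t / (s + t)) (w - (t / (s + t)) • a) := by
  have hst : 0 < s + t := by linarith
  have hB : ‖w - (t / (s + t)) • a‖ ^ 2
      = ‖w‖ ^ 2 - 2 * ((t / (s + t)) * inner ℝ a w) + (t / (s + t)) ^ 2 * ‖a‖ ^ 2 := by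
    rw [norm_sub_sq_real, real_inner_smul_right, real_inner_comm w a, norm_smul,
      Real.norm_eq_abs, mul_pow, sq_abs]
  rw [heatKernel_eq, heatKernel_eq, heatKernel_eq, heatKernel_eq, norm_sub_sq_real, hB,
    mul_mul_mul_comm, mul_mul_mul_comm ((4 * Real.pi * (s + t)) ^ (-(n : ℝ) / 2)),
    ← Real.exp_add, ← Real.exp_add, ← Real.mul_rpow (by positivity) (by positivity),
    ← Real.mul_rpow (by positivity) (by positivity)]
  congr 2
  · field_simp
  · field_simp
    ring

lemma heatKernel_convolution_heatKernel (hs : 0 < s) (ht : 0 < t) :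
    heatKernel n s ⋆[mul ℝ ℝ] heatKernel n t = heatKernel n (s + t) := by
  ext a
  rw [convolution_mul, ← integral_sub_left_eq_self _ volume a]
  simp_rw [_root_.sub_sub_cancel, heatKernel_mul_heatKernel hs ht, integral_const_mul,
    integral_sub_right_eq_self (heatKernel n (s * t / (s + t))),
    integral_heatKernel (show 0 < s * t / (s + t) by positivity), mul_one]

noncomputable def heatKernelFDeriv (n : ℕ) (t : ℝ) (z : EuclideanSpace ℝ (Fin n)) :
    EuclideanSpace ℝ (Fin n) →L[ℝ] ℝ :=
  (-(2 * t)⁻¹ * heatKernel n t z) • innerSL ℝ z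

lemma hasFDerivAt_heatKernel (ht : 0 < t) (z : E) :
    HasFDerivAt (heatKernel n t) (heatKernelFDeriv n t z) z := by
  have h := ((((hasFDerivAt_id z).norm_sq).const_mul (-(1 / (4 * t)))).exp).const_mul
    ((4 * Real.pi * t) ^ (-(n : ℝ) / 2))
  rw [show heatKernel n t = _ from funext (heatKernel_eq (n := n) t)]
  refine h.congr_fderiv ?_
  ext w
  simp only [heatKernelFDeriv, heatKernel_eq, smul_apply, innerSL_apply_apply, smul_eq_mul,
    id_eq, ContinuousLinearMap.comp_id]
  field_simp
  ring

lemma continuous_heatKernelFDeriv (t : ℝ) : Continuous (heatKernelFDeriv n t) := by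
  unfold heatKernelFDeriv
  exact (continuous_const.mul (continuous_heatKernel t)).smul (innerSL ℝ).continuous

lemma norm_heatKernelFDeriv_le (ht : 0 < t) (z : E) :
    ‖heatKernelFDeriv n t z‖ ≤ (4 * Real.pi * t) ^ (-(n : ℝ) / 2) * (2 * t)⁻¹ * (1 + 4 * t) := by
  rw [heatKernelFDeriv, norm_smul, innerSL_apply_norm, norm_mul, norm_neg, norm_inv,
    Real.norm_of_nonneg (heatKernel_pos ht z).le, Real.norm_of_nonneg (by positivity : 0 ≤ 2 * t)]
  calc (2 * t)⁻¹ * heatKernel n t z * ‖z‖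
      = (2 * t)⁻¹
          * ((4 * Real.pi * t) ^ (-(n : ℝ) / 2) * (‖z‖ * Real.exp (-‖z‖ ^ 2 / (4 * t)))) := by
        rw [heatKernel]; ring
    _ ≤ (2 * t)⁻¹ * ((4 * Real.pi * t) ^ (-(n : ℝ) / 2) * (1 + 4 * t)) := by
        gcongr; exact mul_exp_neg_sq_div_le ht _
    _ = _ := by ring

lemma heatSG_of_ne_zero (ht : t ≠ 0) (f : E → ℝ) :
    heatSG n t f = f ⋆[mul ℝ ℝ] heatKernel n t :=
  funext fun _ => if_neg ht

lemma heatSG_const_mul (c : ℝ) (f : E → ℝ) (x : E) :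
    heatSG n t (fun y => c * f y) x = c * heatSG n t f x := by
  unfold heatSG
  split_ifs
  · rfl
  · simp_rw [mul_assoc, integral_const_mul]

lemma heatSG_add (hs : 0 < s) (ht : 0 < t) {f : E → ℝ} (hf : Integrable f) :
    heatSG n (t + s) f = heatSG n s (heatSG n t f) := by
  have hnorm : ∀ r, 0 < r → (fun x => ‖heatKernel n r x‖) = heatKernel n r := fun r hr =>
    funext fun x => Real.norm_of_nonneg (heatKernel_pos hr x).le
  ext x
  rw [heatSG_of_ne_zero (add_pos ht hs).ne', heatSG_of_ne_zero hs.ne', heatSG_of_ne_zero ht.ne',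
    ← heatKernel_convolution_heatKernel ht hs]
  have hfg : ∀ᵐ y, ConvolutionExistsAt f (heatKernel n t) y (mul ℝ ℝ) :=
    ae_of_all _ fun y => convolutionExistsAt_of_bounded hf (continuous_heatKernel t)
      (norm_heatKernel_le ht) y
  have hgk : ∀ᵐ y, ConvolutionExistsAt (fun x => ‖heatKernel n t x‖)
      (fun x => ‖heatKernel n s x‖) y (mul ℝ ℝ) := by
    rw [hnorm t ht, hnorm s hs]
    exact ae_of_all _ fun y => convolutionExistsAt_of_bounded (integrable_heatKernel ht)
      (continuous_heatKernel s) (norm_heatKernel_le hs) y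
  have hfgk : ConvolutionExistsAt (fun x => ‖f x‖)
      ((fun x => ‖heatKernel n t x‖) ⋆[mul ℝ ℝ] fun x => ‖heatKernel n s x‖) x (mul ℝ ℝ) := by
    rw [hnorm t ht, hnorm s hs, heatKernel_convolution_heatKernel ht hs]
    exact convolutionExistsAt_of_bounded hf.norm (continuous_heatKernel _)
      (norm_heatKernel_le (by positivity)) x
  exact (convolution_assoc (mul ℝ ℝ) (mul ℝ ℝ) (mul ℝ ℝ) (mul ℝ ℝ) (fun a b c => mul_assoc a b c)
    hf.aestronglyMeasurable (continuous_heatKernel t).aestronglyMeasurable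
    (continuous_heatKernel s).aestronglyMeasurable hfg hgk hfgk).symm

lemma norm_heatSG_le (ht : 0 < t) {f : E → ℝ} (hf : Integrable f) (x : E) :
    ‖heatSG n t f x‖ ≤ (∫ y, ‖f y‖) * (4 * Real.pi * t) ^ (-(n : ℝ) / 2) := by
  rw [heatSG_of_ne_zero ht.ne']
  exact norm_convolution_lsmul_le hf (norm_heatKernel_le ht) x

lemma hasFDerivAt_heatSG (ht : 0 < t) {f : E → ℝ} (hf : Integrable f) (x : E) :
    HasFDerivAt (heatSG n t f) ((f ⋆[lsmul ℝ ℝ] heatKernelFDeriv n t) x) x := by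
  rw [heatSG_of_ne_zero ht.ne']
  exact hasFDerivAt_convolution_of_bounded hf (hasFDerivAt_heatKernel ht) (norm_heatKernel_le ht)
    (continuous_heatKernelFDeriv t) (norm_heatKernelFDeriv_le ht) x

lemma fderiv_heatSG (ht : 0 < t) {f : E → ℝ} (hf : Integrable f) :
    fderiv ℝ (heatSG n t f) = f ⋆[lsmul ℝ ℝ] heatKernelFDeriv n t :=
  funext fun x => (hasFDerivAt_heatSG ht hf x).fderiv

lemma continuous_fderiv_heatSG (ht : 0 < t) {f : E → ℝ} (hf : Integrable f) :
    Continuous (fderiv ℝ (heatSG n t f)) := by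
  rw [fderiv_heatSG ht hf]
  exact BddAbove.continuous_convolution_right_of_integrable _
    ⟨_, Set.forall_mem_range.mpr (norm_heatKernelFDeriv_le ht)⟩ hf (continuous_heatKernelFDeriv t)

lemma norm_fderiv_heatSG_le (ht : 0 < t) {f : E → ℝ} (hf : Integrable f) (x : E) :
    ‖fderiv ℝ (heatSG n t f) x‖
      ≤ (∫ y, ‖f y‖) * ((4 * Real.pi * t) ^ (-(n : ℝ) / 2) * (2 * t)⁻¹ * (1 + 4 * t)) := by
  rw [fderiv_heatSG ht hf]
  exact norm_convolution_lsmul_le hf (norm_heatKernelFDeriv_le ht) x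

lemma hasFDerivAt_heatSG_add (hs : 0 < s) (ht : 0 < t) {f : E → ℝ} (hf : Integrable f) (x : E) :
    HasFDerivAt (heatSG n (t + s) f)
      ((heatKernel n s ⋆[lsmul ℝ ℝ] fderiv ℝ (heatSG n t f)) x) x := by
  rw [heatSG_add hs ht hf, heatSG_of_ne_zero hs.ne', ← convolution_flip, flip_mul]
  exact hasFDerivAt_convolution_of_bounded (integrable_heatKernel hs)
    (fun y => (hasFDerivAt_heatSG ht hf y).differentiableAt.hasFDerivAt) (norm_heatSG_le ht hf)
    (continuous_fderiv_heatSG ht hf) (norm_fderiv_heatSG_le ht hf) x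

lemma sq_norm_heatKernel_convolution_le {F : Type*} [NormedAddCommGroup F] [NormedSpace ℝ F]
    (hs : 0 < s) {D : E → F} {C : ℝ} (hD : Continuous D) (hDb : ∀ y, ‖D y‖ ≤ C) (x : E) :
    ‖(heatKernel n s ⋆[lsmul ℝ ℝ] D) x‖ ^ 2 ≤ heatSG n s (fun y => ‖D y‖ ^ 2) x := by
  rw [heatSG_of_ne_zero hs.ne', ← convolution_flip (mul ℝ ℝ), flip_mul, convolution_lsmul,
    convolution_mul]
  exact norm_integral_smul_sq_le (fun y => (heatKernel_pos hs y).le) (integrable_heatKernel hs)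
    (integral_heatKernel hs) (hD.comp (continuous_sub_left x)).aestronglyMeasurable (fun _ => hDb _)

lemma sq_norm_fderiv_heatSG_add_le (hs : 0 < s) (ht : 0 < t) {f : E → ℝ} (hf : Integrable f)
    (x : E) :
    ‖fderiv ℝ (heatSG n (t + s) f) x‖ ^ 2
      ≤ heatSG n s (fun y => ‖fderiv ℝ (heatSG n t f) y‖ ^ 2) x := by
  rw [(hasFDerivAt_heatSG_add hs ht hf x).fderiv]
  exact sq_norm_heatKernel_convolution_le hs (continuous_fderiv_heatSG ht hf)
    (norm_fderiv_heatSG_le ht hf) x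

lemma sq_exp_mul_norm_fderiv_heatSG_two_mul_le {α : ℝ} (hα : 0 ≤ α) (hs : 0 < s) {f : E → ℝ}
    (hf : Integrable f) (x : E) :
    (Real.exp (-α * (2 * s)) * ‖fderiv ℝ (heatSG n (2 * s) f) x‖) ^ 2
      ≤ Real.exp (-α * s)
          * heatSG n s (fun y => (Real.exp (-α * s) * ‖fderiv ℝ (heatSG n s f) y‖) ^ 2) x := by
  set e := Real.exp (-α * s)
  have he1 : e ≤ 1 := Real.exp_le_one_iff.mpr (by nlinarith)
  have he2 : Real.exp (-α * (2 * s)) = e ^ 2 := by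
    rw [show -α * (2 * s) = -α * s + -α * s by ring, Real.exp_add, sq]
  have hsq := sq_norm_fderiv_heatSG_add_le hs hs hf x
  rw [← two_mul] at hsq
  simp_rw [mul_pow]
  rw [heatSG_const_mul, he2]
  set H := heatSG n s (fun y => ‖fderiv ℝ (heatSG n s f) y‖ ^ 2) x
  calc (e ^ 2) ^ 2 * ‖fderiv ℝ (heatSG n (2 * s) f) x‖ ^ 2 ≤ e ^ 4 * H := by
        rw [← pow_mul]; exact mul_le_mul_of_nonneg_left hsq (by positivity)
    _ ≤ e ^ 3 * H := mul_le_mul_of_nonneg_right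
        (pow_le_pow_of_le_one (by positivity) he1 (by norm_num)) ((sq_nonneg _).trans hsq)
    _ = e * (e ^ 2 * H) := by ring

end HeatKernel

theorem G_le_sqrt_two_G_star_general (n : ℕ) (α : ℝ) (hα : 0 ≤ α)
    (f : EuclideanSpace ℝ (Fin n) → ℝ) (hfi : Integrable f volume)
    (x : EuclideanSpace ℝ (Fin n)) :
    ∫⁻ t in Set.Ioi (0 : ℝ),
        ENNReal.ofReal ((Real.exp (-α * t) * ‖fderiv ℝ (heatSG n t f) x‖) ^ 2)
      ≤ 2 * ∫⁻ t in Set.Ioi (0 : ℝ),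
          ENNReal.ofReal (Real.exp (-α * t) *
            heatSG n t (fun y => (Real.exp (-α * t) * ‖fderiv ℝ (heatSG n t f) y‖) ^ 2) x) := by
  rw [lintegral_Ioi_eq_mul_lintegral_comp_mul two_pos, ENNReal.ofReal_ofNat]
  gcongr 2 * ?_
  exact setLIntegral_mono' measurableSet_Ioi fun s hs =>
    ENNReal.ofReal_le_ofReal (HeatKernel.sq_exp_mul_norm_fderiv_heatSG_two_mul_le hα hs hfi x)

/-- Pointwise comparison `𝒢(f)(x) ≤ √2 · 𝒢_*(f)(x)` (Euclidean, `K = 0`):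
`∫_0^∞ |∇H_t^α f(x)|² dt ≤ 2 ∫_0^∞ e^{-αt} H_t(|∇H_t^α f|²)(x) dt`,
where `H_t^α = e^{-αt} H_t` so that `|∇H_t^α f| = e^{-αt} |∇H_t f|`. -/
theorem G_le_sqrt_two_G_star (n : ℕ) (hn : 1 ≤ n) (α : ℝ) (hα : 0 ≤ α)
    (f : EuclideanSpace ℝ (Fin n) → ℝ) (hfc : Continuous f)
    (hfb : ∃ M : ℝ, ∀ y, |f y| ≤ M) (hfi : Integrable f volume)
    (x : EuclideanSpace ℝ (Fin n)) :
    ∫⁻ t in Set.Ioi (0 : ℝ),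
        ENNReal.ofReal ((Real.exp (-α * t) * ‖fderiv ℝ (heatSG n t f) x‖) ^ 2)
      ≤ 2 * ∫⁻ t in Set.Ioi (0 : ℝ),
          ENNReal.ofReal (Real.exp (-α * t) *
            heatSG n t (fun y => (Real.exp (-α * t) * ‖fderiv ℝ (heatSG n t f) y‖) ^ 2) x) :=
  G_le_sqrt_two_G_star_general n α hα f hfi x
end

section
/- Let n ≥ 1 and let f : ℝⁿ → ℝ be bounded, continuous and integrable. Then for every x ∈ ℝⁿ, ∫_0^∞ t |∇P_t f(x)|² dt ≤ ∫_0^∞ |∇H_s f(x)|² ds. -/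
open MeasureTheory ENNReal

/-- The Poisson kernel on `ℝⁿ`:
`p_t(x) = Γ((n+1)/2) π^{-(n+1)/2} t (t² + |x|²)^{-(n+1)/2}`. -/
noncomputable def poissonKernelRn (n : ℕ) (t : ℝ) (x : EuclideanSpace ℝ (Fin n)) : ℝ :=
  Real.Gamma (((n : ℝ) + 1) / 2) * Real.pi ^ (-((n : ℝ) + 1) / 2) * t *
    (t ^ 2 + ‖x‖ ^ 2) ^ (-((n : ℝ) + 1) / 2)

/-- The Poisson (subordinated) semigroup on `ℝⁿ`: `P_t f = f * p_t` for `t > 0`,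
`P_0 f = f`, so that `P_t = e^{-t√(-Δ)}`. -/
noncomputable def poissonSG (n : ℕ) (t : ℝ) (f : EuclideanSpace ℝ (Fin n) → ℝ)
    (x : EuclideanSpace ℝ (Fin n)) : ℝ :=
  if t = 0 then f x else ∫ y, f y * poissonKernelRn n t (x - y)

/-!
By subordination, `P_t = ∫₀^∞ ν_t(s) H_s ds` with the probability density
`ν_t(s) = t (4π)^{-1/2} s^{-3/2} e^{-t²/(4s)}`; on the level of kernel gradients this is the
integral `∫₀^∞ s^a e^{-r/s} ds = r^{a+1} Γ(-a-1)`. Hence `∇P_t f(x) = ∫₀^∞ ν_t(s) ∇H_s f(x) ds`,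
and Jensen's inequality (Cauchy–Schwarz against `ν_t`) gives
`|∇P_t f(x)|² ≤ ∫₀^∞ ν_t(s) |∇H_s f(x)|² ds`. Multiplying by `t`, integrating in `t` and using
`∫₀^∞ t ν_t(s) dt = 1` for every `s > 0` (Tonelli) yields the claim.
-/

open Real Set Function

section Integral

variable {α : Type*} [MeasurableSpace α] {μ : Measure α}

theorem ENNReal.lintegral_mul_sq_le {f g : α → ℝ≥0∞} (hf : AEMeasurable f μ)
    (hg : AEMeasurable g μ) :
    (∫⁻ a, f a * g a ∂μ) ^ 2 ≤ (∫⁻ a, f a ∂μ) * ∫⁻ a, f a * g a ^ 2 ∂μ := by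
  have hsq : ∀ c : ℝ≥0∞, (c ^ (1 / 2 : ℝ)) ^ 2 = c := fun c => by
    rw [← ENNReal.rpow_natCast, ← ENNReal.rpow_mul]; norm_num
  have hgeom : ∀ a, f a ^ (1 / 2 : ℝ) * (f a * g a ^ 2) ^ (1 / 2 : ℝ) = f a * g a := fun a => by
    rw [ENNReal.mul_rpow_of_nonneg _ _ (by norm_num), ← mul_assoc,
      ← ENNReal.rpow_add_of_nonneg _ _ (by norm_num) (by norm_num), ← ENNReal.rpow_natCast,
      ← ENNReal.rpow_mul]
    norm_num
  have holder := ENNReal.lintegral_mul_norm_pow_le (g := fun a => f a * g a ^ 2) hf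
    (hf.mul (hg.pow_const 2)) (p := 1 / 2) (q := 1 / 2) (by norm_num) (by norm_num) (by norm_num)
  simp only [hgeom] at holder
  calc (∫⁻ a, f a * g a ∂μ) ^ 2
      ≤ ((∫⁻ a, f a ∂μ) ^ (1 / 2 : ℝ) * (∫⁻ a, f a * g a ^ 2 ∂μ) ^ (1 / 2 : ℝ)) ^ 2 := by
        gcongr
    _ = (∫⁻ a, f a ∂μ) * ∫⁻ a, f a * g a ^ 2 ∂μ := by rw [mul_pow, hsq, hsq]

variable {E : Type*} [NormedAddCommGroup E] [NormedSpace ℝ E]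

theorem enorm_integral_smul_sq_le {w : α → ℝ} {V : α → E} (hw : AEStronglyMeasurable w μ)
    (hV : AEStronglyMeasurable V μ) (hw1 : ∫⁻ a, ‖w a‖ₑ ∂μ = 1) :
    ‖∫ a, w a • V a ∂μ‖ₑ ^ 2 ≤ ∫⁻ a, ‖w a‖ₑ * ‖V a‖ₑ ^ 2 ∂μ :=
  calc ‖∫ a, w a • V a ∂μ‖ₑ ^ 2 ≤ (∫⁻ a, ‖w a‖ₑ * ‖V a‖ₑ ∂μ) ^ 2 := by
        gcongr
        simpa only [enorm_smul] using
          enorm_integral_le_lintegral_enorm (μ := μ) (fun a => w a • V a)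
    _ ≤ ∫⁻ a, ‖w a‖ₑ * ‖V a‖ₑ ^ 2 ∂μ := by
        simpa only [hw1, one_mul] using ENNReal.lintegral_mul_sq_le hw.enorm hV.enorm

theorem lintegral_lintegral_mul_of_lintegral_eq_one {β : Type*} [MeasurableSpace β]
    {ν : Measure β} [SFinite μ] [SFinite ν] {k : α → β → ℝ≥0∞} {g : β → ℝ≥0∞}
    (hk : Measurable (uncurry k)) (hg : AEMeasurable g ν) (hk1 : ∀ᵐ b ∂ν, ∫⁻ a, k a b ∂μ = 1) :
    ∫⁻ a, ∫⁻ b, k a b * g b ∂ν ∂μ = ∫⁻ b, g b ∂ν := by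
  rw [lintegral_lintegral_swap (hk.aemeasurable.mul hg.comp_snd)]
  refine lintegral_congr_ae (hk1.mono fun b hb => ?_)
  change ∫⁻ a, k a b * g b ∂μ = g b
  rw [lintegral_mul_const _ hk.of_uncurry_right, hb, one_mul]

end Integral

section Convolution

variable {E : Type*} [NormedAddCommGroup E] [NormedSpace ℝ E] [MeasurableSpace E]
  [OpensMeasurableSpace E] [SecondCountableTopology E] {μ : Measure E}

theorem hasFDerivAt_integral_mul_sub {K : E → ℝ} {K' : E → E →L[ℝ] ℝ} {C C' : ℝ}
    (hK : ∀ z, HasFDerivAt K (K' z) z) (hK' : Continuous K') (hKC : ∀ z, ‖K z‖ ≤ C)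
    (hK'C : ∀ z, ‖K' z‖ ≤ C') {f : E → ℝ} (hf : Integrable f μ) (x : E) :
    HasFDerivAt (fun x => ∫ y, f y * K (x - y) ∂μ) (∫ y, f y • K' (x - y) ∂μ) x := by
  have hKc : Continuous K := continuous_iff_continuousAt.2 fun z => (hK z).continuousAt
  have hmeas : ∀ x', AEStronglyMeasurable (fun y => K (x' - y)) μ := fun x' =>
    (hKc.comp (continuous_const.sub continuous_id)).aestronglyMeasurable
  refine hasFDerivAt_integral_of_dominated_of_fderiv_le (𝕜 := ℝ) (F := fun x' y => f y * K (x' - y))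
    (F' := fun x' y => f y • K' (x' - y)) (bound := fun y => ‖f y‖ * C')
    Filter.univ_mem (Filter.Eventually.of_forall fun x' => hf.aestronglyMeasurable.mul (hmeas x'))
    (hf.mul_bdd (hmeas x) (ae_of_all _ fun y => hKC _))
    (hf.aestronglyMeasurable.smul
      (hK'.comp (continuous_const.sub continuous_id)).aestronglyMeasurable)
    (ae_of_all _ fun y x' _ => ?_) (hf.norm.mul_const C') (ae_of_all _ fun y x' _ => ?_)
  · rw [norm_smul]
    gcongr
    exact hK'C _
  · exact ((hK (x' - y)).comp x' ((hasFDerivAt_id x').sub_const y)).const_mul (f y)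

end Convolution

section HeatKernel

variable {n : ℕ} {s : ℝ}

noncomputable def heatKernelGrad (n : ℕ) (s : ℝ) (z : EuclideanSpace ℝ (Fin n)) :
    EuclideanSpace ℝ (Fin n) →L[ℝ] ℝ :=
  (-heatKernel n s z / (2 * s)) • innerSL ℝ z

theorem heatKernel_pos (hs : 0 < s) (z : EuclideanSpace ℝ (Fin n)) : 0 < heatKernel n s z := by
  unfold heatKernel
  positivity

theorem norm_heatKernel_le (hs : 0 < s) (z : EuclideanSpace ℝ (Fin n)) :
    ‖heatKernel n s z‖ ≤ (4 * π * s) ^ (-(n : ℝ) / 2) := by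
  rw [Real.norm_of_nonneg (heatKernel_pos hs z).le, heatKernel]
  refine mul_le_of_le_one_right (by positivity) (exp_le_one_iff.2 ?_)
  rw [neg_div]
  exact neg_nonpos.2 (by positivity)

theorem hasFDerivAt_heatKernel_s9 (z : EuclideanSpace ℝ (Fin n)) :
    HasFDerivAt (heatKernel n s) (heatKernelGrad n s z) z := by
  have hform : heatKernel n s = fun w => (4 * π * s) ^ (-(n : ℝ) / 2) *
      exp (-‖w‖ ^ 2 * (4 * s)⁻¹) := by
    funext w
    simp only [heatKernel, div_eq_mul_inv]
  rw [hform]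
  refine ((((hasFDerivAt_id z).norm_sq.neg.mul_const (4 * s)⁻¹).exp).const_mul _).congr_fderiv ?_
  ext v
  simp only [id_eq, Pi.neg_apply, mul_inv_rev, neg_mul, ContinuousLinearMap.comp_id, smul_neg,
    neg_apply, smul_apply, coe_innerSL_apply, nsmul_eq_mul,
    Nat.cast_ofNat, smul_eq_mul, heatKernelGrad, heatKernel]
  rw [show -(‖z‖ ^ 2 * (s⁻¹ * 4⁻¹)) = -‖z‖ ^ 2 / (4 * s) by ring]
  ring

theorem mul_exp_neg_sq_div_le_s9 (hs : 0 < s) (r : ℝ) : r * exp (-r ^ 2 / (4 * s)) ≤ 2 * √s := by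
  have hsqrt : 0 < 2 * √s := by positivity
  have key : r / (2 * √s) ≤ exp (r ^ 2 / (4 * s)) :=
    calc r / (2 * √s) ≤ (r / (2 * √s)) ^ 2 + 1 := by nlinarith [sq_nonneg (r / (2 * √s) - 1)]
      _ = r ^ 2 / (4 * s) + 1 := by rw [div_pow, mul_pow, sq_sqrt hs.le]; ring
      _ ≤ exp (r ^ 2 / (4 * s)) := add_one_le_exp _
  rw [neg_div, exp_neg, ← div_eq_mul_inv, div_le_iff₀ (exp_pos _)]
  rwa [div_le_iff₀ hsqrt, mul_comm] at key

theorem norm_heatKernelGrad_le (hs : 0 < s) (z : EuclideanSpace ℝ (Fin n)) :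
    ‖heatKernelGrad n s z‖ ≤ (4 * π * s) ^ (-(n : ℝ) / 2) / √s := by
  rw [heatKernelGrad, norm_smul, innerSL_apply_norm, norm_div, norm_neg,
    Real.norm_of_nonneg (heatKernel_pos hs z).le, Real.norm_of_nonneg (by positivity), heatKernel]
  calc (4 * π * s) ^ (-(n : ℝ) / 2) * exp (-‖z‖ ^ 2 / (4 * s)) / (2 * s) * ‖z‖
      = (4 * π * s) ^ (-(n : ℝ) / 2) / (2 * s) * (‖z‖ * exp (-‖z‖ ^ 2 / (4 * s))) := by ring
    _ ≤ (4 * π * s) ^ (-(n : ℝ) / 2) / (2 * s) * (2 * √s) := by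
        gcongr ?_ * ?_
        exact mul_exp_neg_sq_div_le_s9 hs _
    _ = (4 * π * s) ^ (-(n : ℝ) / 2) / √s := by
        field_simp
        exact sq_sqrt hs.le

theorem continuous_heatKernelGrad : Continuous (heatKernelGrad n s) := by
  unfold heatKernelGrad heatKernel
  fun_prop

theorem stronglyMeasurable_heatKernelGrad : StronglyMeasurable (uncurry (heatKernelGrad n)) := by
  have hc : Measurable fun p : ℝ × EuclideanSpace ℝ (Fin n) =>
      -heatKernel n p.1 p.2 / (2 * p.1) := by
    unfold heatKernel
    fun_prop
  exact hc.stronglyMeasurable.smul ((innerSL ℝ).continuous.comp continuous_snd).stronglyMeasurable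

theorem hasFDerivAt_heatSG_s9 (hs : 0 < s) {f : EuclideanSpace ℝ (Fin n) → ℝ}
    (hf : Integrable f) (x : EuclideanSpace ℝ (Fin n)) :
    HasFDerivAt (heatSG n s f) (∫ y, f y • heatKernelGrad n s (x - y)) x := by
  have hconv : heatSG n s f = fun x => ∫ y, f y * heatKernel n s (x - y) :=
    funext fun _ => if_neg hs.ne'
  rw [hconv]
  exact hasFDerivAt_integral_mul_sub hasFDerivAt_heatKernel_s9 continuous_heatKernelGrad
    (norm_heatKernel_le hs) (norm_heatKernelGrad_le hs) hf x

end HeatKernel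

section PoissonKernel

variable {n : ℕ} {t : ℝ}

noncomputable def poissonKernelGrad (n : ℕ) (t : ℝ) (z : EuclideanSpace ℝ (Fin n)) :
    EuclideanSpace ℝ (Fin n) →L[ℝ] ℝ :=
  (-((n : ℝ) + 1) * Gamma (((n : ℝ) + 1) / 2) * π ^ (-((n : ℝ) + 1) / 2) * t *
    (t ^ 2 + ‖z‖ ^ 2) ^ (-((n : ℝ) + 3) / 2)) • innerSL ℝ z

theorem hasFDerivAt_poissonKernelRn (ht : t ≠ 0) (z : EuclideanSpace ℝ (Fin n)) :
    HasFDerivAt (poissonKernelRn n t) (poissonKernelGrad n t z) z := by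
  have hpos : 0 < t ^ 2 + ‖z‖ ^ 2 := by positivity
  refine ((((hasFDerivAt_id z).norm_sq.const_add (t ^ 2)).rpow_const (Or.inl hpos.ne')).const_mul
    (Gamma (((n : ℝ) + 1) / 2) * π ^ (-((n : ℝ) + 1) / 2) * t)).congr_fderiv ?_
  ext v
  simp only [poissonKernelGrad, id_eq, ContinuousLinearMap.comp_id, smul_apply, coe_innerSL_apply,
    nsmul_eq_mul, Nat.cast_ofNat, smul_eq_mul]
  rw [show -((n : ℝ) + 1) / 2 - 1 = -((n : ℝ) + 3) / 2 by ring]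
  ring

theorem continuous_poissonKernelGrad (ht : t ≠ 0) : Continuous (poissonKernelGrad n t) := by
  have hpow : Continuous fun z : EuclideanSpace ℝ (Fin n) =>
      (t ^ 2 + ‖z‖ ^ 2) ^ (-((n : ℝ) + 3) / 2) :=
    (continuous_const.add (continuous_norm.pow 2)).rpow_const fun z =>
      Or.inl (by positivity : 0 < t ^ 2 + ‖z‖ ^ 2).ne'
  exact (continuous_const.mul hpow).smul (innerSL ℝ).continuous

theorem norm_poissonKernelRn_le (ht : 0 < t) (z : EuclideanSpace ℝ (Fin n)) :
    ‖poissonKernelRn n t z‖ ≤ poissonKernelRn n t 0 := by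
  have hG : 0 < Gamma (((n : ℝ) + 1) / 2) := Gamma_pos_of_pos (by positivity)
  rw [Real.norm_of_nonneg (by unfold poissonKernelRn; positivity), poissonKernelRn,
    poissonKernelRn, norm_zero]
  gcongr ?_ * ?_
  exact rpow_le_rpow_of_nonpos (by positivity) (by nlinarith [sq_nonneg ‖z‖])
    (by linarith [(n.cast_nonneg : (0 : ℝ) ≤ n)])

end PoissonKernel

section Subordination

theorem rpow_mul_exp_neg_mul_inv_comp_rpow_neg_one {a r s : ℝ} (hs : 0 < s) :
    (|(-1 : ℝ)| * s ^ ((-1 : ℝ) - 1)) • ((s ^ (-1 : ℝ)) ^ a * exp (-(r * (s ^ (-1 : ℝ))⁻¹))) =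
      s ^ (-a - 2) * exp (-r * s ^ (1 : ℝ)) := by
  rw [smul_eq_mul, abs_neg, abs_one, one_mul, Real.rpow_neg_one s, inv_inv, Real.inv_rpow hs.le,
    ← Real.rpow_neg hs.le, ← mul_assoc, ← Real.rpow_add hs, Real.rpow_one,
    show (-1 : ℝ) - 1 + -a = -a - 2 by ring, neg_mul]

theorem integrableOn_rpow_mul_exp_neg_mul_inv {a r : ℝ} (ha : a < -1) (hr : 0 < r) :
    IntegrableOn (fun s : ℝ => s ^ a * exp (-(r * s⁻¹))) (Ioi 0) :=
  (integrableOn_Ioi_comp_rpow_iff _ (p := -1) (by norm_num)).1 <|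
    (integrableOn_rpow_mul_exp_neg_mul_rpow (s := -a - 2) (by linarith) one_pos hr).congr_fun
      (fun _ hs => (rpow_mul_exp_neg_mul_inv_comp_rpow_neg_one hs).symm) measurableSet_Ioi

theorem integral_rpow_mul_exp_neg_mul_inv {a r : ℝ} (ha : a < -1) (hr : 0 < r) :
    ∫ s in Ioi 0, s ^ a * exp (-(r * s⁻¹)) = r ^ (a + 1) * Gamma (-a - 1) := by
  rw [← integral_comp_rpow_Ioi _ (p := -1) (by norm_num),
    setIntegral_congr_fun measurableSet_Ioi fun _ hs =>
      rpow_mul_exp_neg_mul_inv_comp_rpow_neg_one hs,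
    integral_rpow_mul_exp_neg_mul_rpow one_pos (by linarith) hr,
    show -(-a - 2 + 1) / 1 = a + 1 by ring, show (-a - 2 + 1) / 1 = -a - 1 by ring]
  ring

noncomputable def subordinationDensity (t s : ℝ) : ℝ :=
  t / (2 * √π) * (s ^ (-(3 : ℝ) / 2) * exp (-(t ^ 2 / 4 * s⁻¹)))

variable {t s : ℝ}

theorem subordinationDensity_nonneg (ht : 0 ≤ t) (hs : 0 ≤ s) : 0 ≤ subordinationDensity t s := by
  unfold subordinationDensity
  positivity

theorem measurable_subordinationDensity : Measurable (uncurry subordinationDensity) := by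
  unfold subordinationDensity uncurry
  fun_prop

theorem integrableOn_subordinationDensity (ht : 0 < t) :
    IntegrableOn (subordinationDensity t) (Ioi 0) :=
  (integrableOn_rpow_mul_exp_neg_mul_inv (by norm_num) (by positivity)).const_mul _

theorem integral_subordinationDensity (ht : 0 < t) :
    ∫ s in Ioi 0, subordinationDensity t s = 1 := by
  unfold subordinationDensity
  rw [integral_const_mul, integral_rpow_mul_exp_neg_mul_inv (by norm_num) (by positivity),
    show -(3 : ℝ) / 2 + 1 = -(1 / 2) by norm_num, show -(-(3 : ℝ) / 2) - 1 = 1 / 2 by norm_num,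
    Gamma_one_half_eq, show t ^ 2 / 4 = (t / 2) ^ (2 : ℝ) by rw [Real.rpow_two]; ring,
    ← Real.rpow_mul (by positivity), show (2 : ℝ) * -(1 / 2) = -1 by norm_num, Real.rpow_neg_one]
  field_simp

theorem lintegral_enorm_subordinationDensity (ht : 0 < t) :
    ∫⁻ s in Ioi 0, ‖subordinationDensity t s‖ₑ = 1 := by
  rw [← ofReal_integral_norm_eq_lintegral_enorm (integrableOn_subordinationDensity ht),
    setIntegral_congr_fun measurableSet_Ioi fun s hs =>
      Real.norm_of_nonneg (subordinationDensity_nonneg ht.le (le_of_lt hs)),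
    integral_subordinationDensity ht, ENNReal.ofReal_one]

theorem mul_subordinationDensity_eq (s t : ℝ) :
    t * subordinationDensity t s =
      s ^ (-(3 : ℝ) / 2) / (2 * √π) * (t ^ (2 : ℝ) * exp (-(s⁻¹ / 4) * t ^ (2 : ℝ))) := by
  unfold subordinationDensity
  rw [Real.rpow_two, show -(t ^ 2 / 4 * s⁻¹) = -(s⁻¹ / 4) * t ^ 2 by ring]
  ring

theorem integrableOn_mul_subordinationDensity (hs : 0 < s) :
    IntegrableOn (fun t => t * subordinationDensity t s) (Ioi 0) := by
  simp only [mul_subordinationDensity_eq s]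
  exact (integrableOn_rpow_mul_exp_neg_mul_rpow (by norm_num) two_pos (by positivity)).const_mul _

theorem integral_mul_subordinationDensity (hs : 0 < s) :
    ∫ t in Ioi 0, t * subordinationDensity t s = 1 := by
  simp only [mul_subordinationDensity_eq s]
  have h4 : (4 : ℝ) ^ (3 / 2 : ℝ) = 8 := by
    rw [show (4 : ℝ) = 2 ^ (2 : ℝ) by norm_num, ← Real.rpow_mul (by norm_num)]
    norm_num
  rw [integral_const_mul, integral_rpow_mul_exp_neg_mul_rpow two_pos (by norm_num) (by positivity),
    show ((2 : ℝ) + 1) / 2 = 1 / 2 + 1 by norm_num, Gamma_add_one (by norm_num),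
    Gamma_one_half_eq, show -((2 : ℝ) + 1) / 2 = -(3 / 2) by norm_num,
    show -(3 : ℝ) / 2 = -(3 / 2) by norm_num, Real.rpow_neg hs.le, Real.rpow_neg (by positivity),
    Real.div_rpow (inv_nonneg.2 hs.le) (by norm_num), Real.inv_rpow hs.le, h4]
  field_simp
  norm_num

theorem lintegral_ofReal_mul_subordinationDensity (hs : 0 < s) :
    ∫⁻ t in Ioi 0, ENNReal.ofReal (t * subordinationDensity t s) = 1 := by
  rw [← ofReal_integral_eq_lintegral_ofReal (integrableOn_mul_subordinationDensity hs)
    ((ae_restrict_mem measurableSet_Ioi).mono fun t ht =>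
      mul_nonneg (le_of_lt ht) (subordinationDensity_nonneg (le_of_lt ht) hs.le)),
    integral_mul_subordinationDensity hs, ENNReal.ofReal_one]

end Subordination

section PoissonSemigroup

variable {n : ℕ} {t : ℝ}

theorem integral_subordinationDensity_mul_heatKernel (ht : 0 < t) (z : EuclideanSpace ℝ (Fin n)) :
    ∫ s in Ioi 0, subordinationDensity t s * (-heatKernel n s z / (2 * s)) =
      -((n : ℝ) + 1) * Gamma (((n : ℝ) + 1) / 2) * π ^ (-((n : ℝ) + 1) / 2) * t *
        (t ^ 2 + ‖z‖ ^ 2) ^ (-((n : ℝ) + 3) / 2) := by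
  have hA : 0 < t ^ 2 + ‖z‖ ^ 2 := by positivity
  set C := -(t / (4 * √π)) * (4 * π) ^ (-(n : ℝ) / 2) with hC
  have hintegrand : ∀ s ∈ Ioi (0 : ℝ), subordinationDensity t s * (-heatKernel n s z / (2 * s)) =
      C * (s ^ (-((n : ℝ) + 5) / 2) * exp (-((t ^ 2 + ‖z‖ ^ 2) / 4 * s⁻¹))) := by
    intro s hs
    have hs : (0 : ℝ) < s := hs
    have hexp : exp (-(t ^ 2 / 4 * s⁻¹)) * exp (-‖z‖ ^ 2 / (4 * s)) =
        exp (-((t ^ 2 + ‖z‖ ^ 2) / 4 * s⁻¹)) := by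
      rw [← exp_add]
      congr 1
      field_simp
      ring
    have hpow : s ^ (-(3 : ℝ) / 2) * s ^ (-(n : ℝ) / 2) * s⁻¹ = s ^ (-((n : ℝ) + 5) / 2) := by
      rw [← Real.rpow_neg_one s, ← Real.rpow_add hs, ← Real.rpow_add hs]
      congr 1
      ring
    unfold subordinationDensity heatKernel
    rw [Real.mul_rpow (by positivity) hs.le, ← hexp, ← hpow]
    ring
  have hcoef : C * 4 ^ (((n : ℝ) + 3) / 2) * (((n : ℝ) + 1) / 2) =
      -((n : ℝ) + 1) * π ^ (-((n : ℝ) + 1) / 2) * t := by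
    have h4 : (4 : ℝ) ^ (-(n : ℝ) / 2) * 4 ^ (((n : ℝ) + 3) / 2) = 8 := by
      rw [← Real.rpow_add (by norm_num), show -(n : ℝ) / 2 + ((n : ℝ) + 3) / 2 = 3 / 2 by ring,
        show (4 : ℝ) = 2 ^ (2 : ℝ) by norm_num, ← Real.rpow_mul (by norm_num)]
      norm_num
    have hπ : π ^ (-(n : ℝ) / 2) / √π = π ^ (-((n : ℝ) + 1) / 2) := by
      rw [sqrt_eq_rpow, ← Real.rpow_sub pi_pos]
      ring_nf
    rw [← hπ, hC, Real.mul_rpow (by norm_num) pi_pos.le]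
    linear_combination (-(t / √π) * (((n : ℝ) + 1) / 8) * π ^ (-(n : ℝ) / 2)) * h4
  rw [setIntegral_congr_fun measurableSet_Ioi hintegrand, integral_const_mul,
    integral_rpow_mul_exp_neg_mul_inv (by linarith [(n.cast_nonneg : (0 : ℝ) ≤ n)])
      (by positivity),
    show -((n : ℝ) + 5) / 2 + 1 = -((n : ℝ) + 3) / 2 by ring,
    show -(-((n : ℝ) + 5) / 2) - 1 = ((n : ℝ) + 1) / 2 + 1 by ring,
    Gamma_add_one (by positivity), Real.div_rpow hA.le (by norm_num), div_eq_mul_inv,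
    ← Real.rpow_neg (by norm_num), show -(-((n : ℝ) + 3) / 2) = ((n : ℝ) + 3) / 2 by ring]
  linear_combination (Gamma (((n : ℝ) + 1) / 2) * (t ^ 2 + ‖z‖ ^ 2) ^ (-((n : ℝ) + 3) / 2)) * hcoef

theorem poissonKernelGrad_eq_integral (ht : 0 < t) (z : EuclideanSpace ℝ (Fin n)) :
    poissonKernelGrad n t z = ∫ s in Ioi 0, subordinationDensity t s • heatKernelGrad n s z := by
  simp only [heatKernelGrad, smul_smul]
  rw [integral_smul_const, integral_subordinationDensity_mul_heatKernel ht, poissonKernelGrad]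

theorem integrableOn_subordinationDensity_mul_heatKernelGrad_bound (ht : 0 < t) :
    IntegrableOn (fun s => subordinationDensity t s * ((4 * π * s) ^ (-(n : ℝ) / 2) / √s))
      (Ioi 0) := by
  refine IntegrableOn.congr_fun ((integrableOn_rpow_mul_exp_neg_mul_inv (a := -((n : ℝ) + 4) / 2)
    (by linarith [(n.cast_nonneg : (0 : ℝ) ≤ n)]) (by positivity : 0 < t ^ 2 / 4)).const_mul
    (t / (2 * √π) * (4 * π) ^ (-(n : ℝ) / 2))) (fun s hs => ?_) measurableSet_Ioi
  have hs : (0 : ℝ) < s := hs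
  have hpow : s ^ (-((n : ℝ) + 4) / 2) = s ^ (-(3 : ℝ) / 2) * s ^ (-(n : ℝ) / 2) / √s := by
    rw [sqrt_eq_rpow, ← Real.rpow_add hs, ← Real.rpow_sub hs]
    ring_nf
  unfold subordinationDensity
  rw [Real.mul_rpow (by positivity) hs.le, hpow]
  ring

theorem norm_poissonKernelGrad_le (ht : 0 < t) (z : EuclideanSpace ℝ (Fin n)) :
    ‖poissonKernelGrad n t z‖ ≤
      ∫ s in Ioi 0, subordinationDensity t s * ((4 * π * s) ^ (-(n : ℝ) / 2) / √s) := by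
  rw [poissonKernelGrad_eq_integral ht]
  refine norm_integral_le_of_norm_le (integrableOn_subordinationDensity_mul_heatKernelGrad_bound ht)
    ((ae_restrict_mem measurableSet_Ioi).mono fun s hs => ?_)
  have hν := subordinationDensity_nonneg ht.le (le_of_lt hs)
  rw [norm_smul, Real.norm_of_nonneg hν]
  exact mul_le_mul_of_nonneg_left (norm_heatKernelGrad_le hs z) hν

theorem hasFDerivAt_poissonSG (ht : 0 < t) {f : EuclideanSpace ℝ (Fin n) → ℝ}
    (hf : Integrable f) (x : EuclideanSpace ℝ (Fin n)) :
    HasFDerivAt (poissonSG n t f) (∫ y, f y • poissonKernelGrad n t (x - y)) x := by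
  have hconv : poissonSG n t f = fun x => ∫ y, f y * poissonKernelRn n t (x - y) :=
    funext fun _ => if_neg ht.ne'
  rw [hconv]
  exact hasFDerivAt_integral_mul_sub (hasFDerivAt_poissonKernelRn ht.ne')
    (continuous_poissonKernelGrad ht.ne') (norm_poissonKernelRn_le ht)
    (norm_poissonKernelGrad_le ht) hf x

end PoissonSemigroup

section SquareFunction

variable {n : ℕ} {t : ℝ} {f : EuclideanSpace ℝ (Fin n) → ℝ}

theorem aestronglyMeasurable_fderiv_heatSG (hf : Integrable f) (x : EuclideanSpace ℝ (Fin n)) :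
    AEStronglyMeasurable (fun s => fderiv ℝ (heatSG n s f) x) (volume.restrict (Ioi 0)) := by
  have hjoint : AEStronglyMeasurable
      (fun p : ℝ × EuclideanSpace ℝ (Fin n) => f p.2 • heatKernelGrad n p.1 (x - p.2))
      (volume.prod volume) :=
    hf.aestronglyMeasurable.comp_snd.smul (stronglyMeasurable_heatKernelGrad.comp_measurable
      (measurable_fst.prodMk (measurable_const.sub measurable_snd))).aestronglyMeasurable
  refine hjoint.integral_prod_right'.restrict.congr ?_
  filter_upwards [ae_restrict_mem measurableSet_Ioi] with s hs
  exact (hasFDerivAt_heatSG_s9 hs hf x).fderiv.symm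

theorem integrable_subordinationDensity_smul_heatKernelGrad (ht : 0 < t) (hf : Integrable f)
    (x : EuclideanSpace ℝ (Fin n)) :
    Integrable (uncurry fun s y => (subordinationDensity t s * f y) • heatKernelGrad n s (x - y))
      ((volume.restrict (Ioi 0)).prod volume) := by
  refine Integrable.mono'
    ((integrableOn_subordinationDensity_mul_heatKernelGrad_bound (n := n) ht).mul_prod hf.norm) ?_ ?_
  · exact ((measurable_subordinationDensity.comp (measurable_const.prodMk measurable_fst)
      ).aestronglyMeasurable.mul hf.aestronglyMeasurable.comp_snd).smul
      (stronglyMeasurable_heatKernelGrad.comp_measurable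
        (measurable_fst.prodMk (measurable_const.sub measurable_snd))).aestronglyMeasurable
  · filter_upwards [Measure.quasiMeasurePreserving_fst.ae (ae_restrict_mem measurableSet_Ioi)]
      with p hp
    have hν := subordinationDensity_nonneg ht.le (le_of_lt hp)
    rw [uncurry_apply_pair, norm_smul, norm_mul, Real.norm_of_nonneg hν]
    calc subordinationDensity t p.1 * ‖f p.2‖ * ‖heatKernelGrad n p.1 (x - p.2)‖
        ≤ subordinationDensity t p.1 * ‖f p.2‖ * ((4 * π * p.1) ^ (-(n : ℝ) / 2) / √p.1) := by
          gcongr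
          exact norm_heatKernelGrad_le hp _
      _ = subordinationDensity t p.1 * ((4 * π * p.1) ^ (-(n : ℝ) / 2) / √p.1) * ‖f p.2‖ := by
          ring

theorem fderiv_poissonSG_eq_integral (ht : 0 < t) (hf : Integrable f)
    (x : EuclideanSpace ℝ (Fin n)) :
    fderiv ℝ (poissonSG n t f) x =
      ∫ s in Ioi 0, subordinationDensity t s • fderiv ℝ (heatSG n s f) x := by
  rw [(hasFDerivAt_poissonSG ht hf x).fderiv]
  calc ∫ y, f y • poissonKernelGrad n t (x - y)
      = ∫ y, ∫ s in Ioi 0, (subordinationDensity t s * f y) • heatKernelGrad n s (x - y) := by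
        refine integral_congr_ae (ae_of_all _ fun y => ?_)
        simp only [poissonKernelGrad_eq_integral ht, ← integral_smul, smul_smul, mul_comm]
    _ = ∫ s in Ioi 0, ∫ y, (subordinationDensity t s * f y) • heatKernelGrad n s (x - y) :=
        (integral_integral_swap
          (integrable_subordinationDensity_smul_heatKernelGrad ht hf x)).symm
    _ = ∫ s in Ioi 0, subordinationDensity t s • fderiv ℝ (heatSG n s f) x := by
        refine setIntegral_congr_fun measurableSet_Ioi fun s hs => ?_
        simp only [(hasFDerivAt_heatSG_s9 hs hf x).fderiv, ← integral_smul, smul_smul]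

theorem ofReal_mul_norm_fderiv_poissonSG_sq_le (ht : 0 < t) (hf : Integrable f)
    (x : EuclideanSpace ℝ (Fin n)) :
    ENNReal.ofReal (t * ‖fderiv ℝ (poissonSG n t f) x‖ ^ 2) ≤
      ∫⁻ s in Ioi 0, ENNReal.ofReal (t * subordinationDensity t s) *
        ENNReal.ofReal (‖fderiv ℝ (heatSG n s f) x‖ ^ 2) := by
  have hJensen := enorm_integral_smul_sq_le
    (integrableOn_subordinationDensity ht).aestronglyMeasurable
    (aestronglyMeasurable_fderiv_heatSG hf x) (lintegral_enorm_subordinationDensity ht)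
  rw [← fderiv_poissonSG_eq_integral ht hf x] at hJensen
  calc ENNReal.ofReal (t * ‖fderiv ℝ (poissonSG n t f) x‖ ^ 2)
      = ENNReal.ofReal t * ‖fderiv ℝ (poissonSG n t f) x‖ₑ ^ 2 := by
        rw [ENNReal.ofReal_mul ht.le, ENNReal.ofReal_pow (norm_nonneg _), ofReal_norm]
    _ ≤ ENNReal.ofReal t * ∫⁻ s in Ioi 0,
          ‖subordinationDensity t s‖ₑ * ‖fderiv ℝ (heatSG n s f) x‖ₑ ^ 2 := by
        gcongr
    _ = _ := by
        rw [← lintegral_const_mul' _ _ ENNReal.ofReal_ne_top]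
        refine setLIntegral_congr_fun measurableSet_Ioi fun s hs => ?_
        rw [Real.enorm_of_nonneg (subordinationDensity_nonneg ht.le (le_of_lt hs)),
          ENNReal.ofReal_mul ht.le, ENNReal.ofReal_pow (norm_nonneg _), ofReal_norm, mul_assoc]

end SquareFunction

theorem poisson_square_function_dominated_general (n : ℕ)
    (f : EuclideanSpace ℝ (Fin n) → ℝ) (hfi : Integrable f volume)
    (x : EuclideanSpace ℝ (Fin n)) :
    ∫⁻ t in Set.Ioi (0 : ℝ), ENNReal.ofReal (t * ‖fderiv ℝ (poissonSG n t f) x‖ ^ 2)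
      ≤ ∫⁻ s in Set.Ioi (0 : ℝ), ENNReal.ofReal (‖fderiv ℝ (heatSG n s f) x‖ ^ 2) := by
  calc ∫⁻ t in Ioi 0, ENNReal.ofReal (t * ‖fderiv ℝ (poissonSG n t f) x‖ ^ 2)
      ≤ ∫⁻ t in Ioi 0, ∫⁻ s in Ioi 0, ENNReal.ofReal (t * subordinationDensity t s) *
          ENNReal.ofReal (‖fderiv ℝ (heatSG n s f) x‖ ^ 2) :=
        setLIntegral_mono' measurableSet_Ioi fun t ht =>
          ofReal_mul_norm_fderiv_poissonSG_sq_le ht hfi x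
    _ = ∫⁻ s in Ioi 0, ENNReal.ofReal (‖fderiv ℝ (heatSG n s f) x‖ ^ 2) :=
        lintegral_lintegral_mul_of_lintegral_eq_one
          (ENNReal.measurable_ofReal.comp (measurable_fst.mul measurable_subordinationDensity))
          (ENNReal.measurable_ofReal.comp_aemeasurable
            ((aestronglyMeasurable_fderiv_heatSG hfi x).norm.pow 2).aemeasurable)
          ((ae_restrict_mem measurableSet_Ioi).mono fun s hs =>
            lintegral_ofReal_mul_subordinationDensity hs)

/-- Pointwise domination of the Poisson square function by the heat square function:
`∫_0^∞ t |∇P_t f(x)|² dt ≤ ∫_0^∞ |∇H_s f(x)|² ds` for bounded continuous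
integrable `f`. -/
theorem poisson_square_function_dominated (n : ℕ) (hn : 1 ≤ n)
    (f : EuclideanSpace ℝ (Fin n) → ℝ) (hfc : Continuous f)
    (hfb : ∃ M : ℝ, ∀ y, |f y| ≤ M) (hfi : Integrable f volume)
    (x : EuclideanSpace ℝ (Fin n)) :
    ∫⁻ t in Set.Ioi (0 : ℝ), ENNReal.ofReal (t * ‖fderiv ℝ (poissonSG n t f) x‖ ^ 2)
      ≤ ∫⁻ s in Set.Ioi (0 : ℝ), ENNReal.ofReal (‖fderiv ℝ (heatSG n s f) x‖ ^ 2) :=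
  poisson_square_function_dominated_general n f hfi x
end
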